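/- arXiv:2212.08189 — 2 statements merged into one kernel-verified Lean document; each statement's English description precedes it below -/
import Mathlib

section
/- Let φ : ℝ^d → ℝ be strictly convex and twice differentiable with positive definite Hessian everywhere, and let X be an integrable ℝ^d-valued random variable. Then the unique minimizer over μ ∈ ℝ^d of E[d_φ(X, μ)] is μ* = E[X], where d_φ is the Bregman divergence generated by φ. -/
/-! The three-point identity
`d(x, μ) = d(x, m) + d(m, μ) + ⟪∇φ m - ∇φ μ, x - m⟫` is affine in `x`, so taking expectations
with `m = E[X]` kills the last term: `E[d(X, μ)] = E[d(X, m)] + d(m, μ)`. Strict convexity makes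
`d(m, μ) > 0` for `μ ≠ m`, since a strictly convex function lies strictly above its tangent planes. -/

open MeasureTheory

section StrictConvexity

variable {𝕜 E F β : Type*} [Field 𝕜] [LinearOrder 𝕜] [AddCommGroup E] [AddCommGroup F]
  [Module 𝕜 E] [Module 𝕜 F] [AddCommMonoid β] [PartialOrder β] [SMul 𝕜 β]

theorem StrictConvexOn.comp_affineMap {f : F → β} {s : Set F} (hf : StrictConvexOn 𝕜 s f)
    (g : E →ᵃ[𝕜] F) (hg : Function.Injective g) : StrictConvexOn 𝕜 (g ⁻¹' s) (f ∘ g) :=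
  ⟨hf.1.affine_preimage g, fun x hx y hy hxy a b ha hb hab => by
    simpa only [Function.comp_apply, Convex.combo_affine_apply hab] using
      hf.2 hx hy (hg.ne hxy) ha hb hab⟩

end StrictConvexity

theorem StrictConvexOn.add_fderiv_lt {E : Type*} [NormedAddCommGroup E] [NormedSpace ℝ E]
    {f : E → ℝ} {f' : E →L[ℝ] ℝ} {s : Set E} {x y : E} (hf : StrictConvexOn ℝ s f)
    (hx : x ∈ s) (hy : y ∈ s) (hxy : x ≠ y) (hf' : HasFDerivAt f f' x) :
    f x + f' (y - x) < f y := by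
  let L : ℝ →ᵃ[ℝ] E := AffineMap.lineMap x y
  have hL : StrictConvexOn ℝ (L ⁻¹' s) (f ∘ L) :=
    hf.comp_affineMap L (AffineMap.lineMap_injective ℝ hxy)
  have hderiv : HasDerivAt (f ∘ L) (f' (y - x)) 0 := by
    have hf'0 : HasFDerivAt f f' (L 0) := by simpa [L] using hf'
    exact hf'0.comp_hasDerivAt 0 AffineMap.hasDerivAt_lineMap
  have hslope := hL.lt_slope_of_hasDerivAt (by simpa [L] using hx) (by simpa [L] using hy)
    one_pos hderiv
  simp only [slope, Function.comp_apply, L, AffineMap.lineMap_apply_zero,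
    AffineMap.lineMap_apply_one, vsub_eq_sub, sub_zero, inv_one, one_smul] at hslope
  linarith

section Bregman

variable {E : Type*} [NormedAddCommGroup E] [InnerProductSpace ℝ E] [CompleteSpace E]

noncomputable def bregmanDiv (φ : E → ℝ) (x μ : E) : ℝ :=
  φ x - φ μ - inner ℝ (gradient φ μ) (x - μ)

theorem bregmanDiv_pos {φ : E → ℝ} {s : Set E} {x μ : E}
    (hφ : StrictConvexOn ℝ s φ) (hx : x ∈ s) (hμ : μ ∈ s) (hxμ : x ≠ μ)
    (hdiff : DifferentiableAt ℝ φ μ) : 0 < bregmanDiv φ x μ := by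
  have htangent := hφ.add_fderiv_lt hμ hx hxμ.symm hdiff.hasGradientAt.hasFDerivAt
  rw [InnerProductSpace.toDual_apply_apply] at htangent
  rw [bregmanDiv]
  linarith

theorem bregmanDiv_three_point (φ : E → ℝ) (x μ ν : E) :
    bregmanDiv φ x μ =
      bregmanDiv φ x ν + bregmanDiv φ ν μ + inner ℝ (gradient φ ν - gradient φ μ) (x - ν) := by
  simp only [bregmanDiv, inner_sub_left, inner_sub_right]
  ring

theorem integral_bregmanDiv_eq_integral_bregmanDiv_mean_add {Ω : Type*}
    [MeasurableSpace Ω] {P : Measure Ω} [IsProbabilityMeasure P] (φ : E → ℝ) {X : Ω → E}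
    (hX : Integrable X P) (μ : E)
    (hint : Integrable (fun ω => bregmanDiv φ (X ω) (∫ ω, X ω ∂P)) P) :
    ∫ ω, bregmanDiv φ (X ω) μ ∂P =
      ∫ ω, bregmanDiv φ (X ω) (∫ ω, X ω ∂P) ∂P + bregmanDiv φ (∫ ω, X ω ∂P) μ := by
  set m := ∫ ω, X ω ∂P
  have hX_centered : Integrable (fun ω => X ω - m) P := hX.sub (integrable_const m)
  have hmean_zero : ∫ ω, inner ℝ (gradient φ m - gradient φ μ) (X ω - m) ∂P = 0 := by
    rw [integral_inner hX_centered, integral_sub hX (integrable_const m), integral_const,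
      probReal_univ, one_smul, sub_self, inner_zero_right]
  have hshift : Integrable (fun ω => bregmanDiv φ (X ω) m + bregmanDiv φ m μ) P :=
    hint.add (integrable_const _)
  rw [funext fun ω => bregmanDiv_three_point φ (X ω) μ m,
    integral_add hshift (hX_centered.const_inner _), integral_add hint (integrable_const _),
    hmean_zero, integral_const, probReal_univ, one_smul, add_zero]

end Bregman

theorem bregman_centroid_general (n : ℕ) {Ω : Type*} [MeasurableSpace Ω]
    (P : Measure Ω) [IsProbabilityMeasure P]
    (φ : EuclideanSpace ℝ (Fin n) → ℝ)
    (hconv : StrictConvexOn ℝ Set.univ φ)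
    (hsmooth : ContDiff ℝ 2 φ)
    (dφ : EuclideanSpace ℝ (Fin n) → EuclideanSpace ℝ (Fin n) → ℝ)
    (hdφ : ∀ x μ, dφ x μ = φ x - φ μ - (inner ℝ (gradient φ μ) (x - μ) : ℝ))
    (X : Ω → EuclideanSpace ℝ (Fin n)) (hX : Integrable X P)
    (hint : ∀ μ, Integrable (fun ω => dφ (X ω) μ) P) :
    ∀ μ, μ ≠ (∫ ω, X ω ∂P) →
      (∫ ω, dφ (X ω) (∫ ω, X ω ∂P) ∂P) < ∫ ω, dφ (X ω) μ ∂P := by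
  intro μ hμ
  obtain rfl : dφ = bregmanDiv φ := funext₂ fun x μ => by rw [hdφ, bregmanDiv]
  rw [integral_bregmanDiv_eq_integral_bregmanDiv_mean_add φ hX μ (hint _)]
  have hgap : 0 < bregmanDiv φ (∫ ω, X ω ∂P) μ :=
    bregmanDiv_pos hconv (Set.mem_univ _) (Set.mem_univ _) hμ.symm
      (hsmooth.differentiable two_ne_zero).differentiableAt
  linarith

/-- For φ strictly convex, twice differentiable with everywhere positive
definite Hessian, and X an integrable random vector, the unique minimizer of
μ ↦ E[d_φ(X, μ)] is μ* = E[X] (the Bregman centroid property). -/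
theorem bregman_centroid (n : ℕ) {Ω : Type*} [MeasurableSpace Ω]
    (P : Measure Ω) [IsProbabilityMeasure P]
    (φ : EuclideanSpace ℝ (Fin n) → ℝ)
    (hconv : StrictConvexOn ℝ Set.univ φ)
    (hsmooth : ContDiff ℝ 2 φ)
    (hhess : ∀ μ v : EuclideanSpace ℝ (Fin n), v ≠ 0 →
      0 < (inner ℝ v (fderiv ℝ (gradient φ) μ v) : ℝ))
    (dφ : EuclideanSpace ℝ (Fin n) → EuclideanSpace ℝ (Fin n) → ℝ)
    (hdφ : ∀ x μ, dφ x μ = φ x - φ μ - (inner ℝ (gradient φ μ) (x - μ) : ℝ))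
    (X : Ω → EuclideanSpace ℝ (Fin n)) (hX : Integrable X P)
    (hint : ∀ μ, Integrable (fun ω => dφ (X ω) μ) P) :
    ∀ μ, μ ≠ (∫ ω, X ω ∂P) →
      (∫ ω, dφ (X ω) (∫ ω, X ω ∂P) ∂P) < ∫ ω, dφ (X ω) μ ∂P :=
  bregman_centroid_general n P φ hconv hsmooth dφ hdφ X hX hint
end

section
/- Let p̂_0, p̂_1 : ℝ^d → [0,∞) and π̂_0, π̂_1 ≥ 0, and suppose π̂_j p̂_j(x) → π_j p_j(x) for almost every x (as a limit of a sequence of estimators), where π_0, π_1 > 0, π_0 + π_1 = 1, and p_0, p_1 are densities. If each π̂_j p̂_j^{(n)} and π_j p_j are densities scaled by probabilities (∫ π̂_j p̂_j^{(n)} = π̂_j^{(n)}, ∫ π_j p_j = π_j) and the convergence is pointwise a.e. with uniform integrable domination, then the classification error of the plug-in rule ĉ_n(x) = argmax_j π̂_j^{(n)} p̂_j^{(n)}(x) converges to the Bayes error P[c*(X) ≠ c(X)] where c*(x) = argmax_j π_j p_j(x). -/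
open MeasureTheory Filter Topology

/-!
Writing `d = π₀ p₀ - π₁ p₁`, the error of the rule "predict 1 on `S`" is `π₁ + ∫_S d`. At every
`z` with `π₀ p₀(z) ≠ π₁ p₁(z)` the plug-in region `{q₀ < q₁}` eventually agrees with the Bayes
region `{π₀ p₀ < π₁ p₁}`, while at ties `d` vanishes; so `1_{q₀ < q₁} d → 1_{π₀ p₀ < π₁ p₁} d`
a.e., and dominated convergence with the integrable majorant `|d|` concludes.
-/

theorem tendsto_ite_lt_sub {ι : Type*} {l : Filter ι} {x y : ι → ℝ} {a b : ℝ}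
    (hx : Tendsto x l (𝓝 a)) (hy : Tendsto y l (𝓝 b)) :
    Tendsto (fun i => if x i < y i then a - b else 0) l (𝓝 (if a < b then a - b else 0)) := by
  rcases lt_trichotomy a b with hab | rfl | hab
  · rw [if_pos hab]
    exact tendsto_const_nhds.congr' ((hx.eventually_lt hy hab).mono fun i hi => (if_pos hi).symm)
  · simp only [sub_self, ite_self]
    exact tendsto_const_nhds
  · rw [if_neg hab.not_gt]
    exact tendsto_const_nhds.congr'
      ((hy.eventually_lt hx hab).mono fun i hi => (if_neg hi.not_gt).symm)

section

variable {α : Type*} [MeasurableSpace α] {μ : Measure α} {f g : α → ℝ}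

theorem mul_setIntegral_add_mul_setIntegral_compl {S : Set α} (hS : NullMeasurableSet S μ)
    (hf : Integrable f μ) (hg : Integrable g μ) (a b : ℝ) :
    a * ∫ z in S, f z ∂μ + b * ∫ z in Sᶜ, g z ∂μ
      = b * ∫ z, g z ∂μ + ∫ z in S, (a * f z - b * g z) ∂μ := by
  rw [integral_sub (hf.const_mul a).integrableOn (hg.const_mul b).integrableOn,
    integral_const_mul, integral_const_mul, setIntegral_compl₀ hS hg]
  ring

theorem tendsto_setIntegral_lt_sub {u v : ℕ → α → ℝ}
    (hf : Integrable f μ) (hg : Integrable g μ)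
    (huv : ∀ m, NullMeasurableSet {z | u m z < v m z} μ)
    (hu : ∀ᵐ z ∂μ, Tendsto (u · z) atTop (𝓝 (f z)))
    (hv : ∀ᵐ z ∂μ, Tendsto (v · z) atTop (𝓝 (g z))) :
    Tendsto (fun m => ∫ z in {z | u m z < v m z}, (f z - g z) ∂μ) atTop
      (𝓝 (∫ z in {z | f z < g z}, (f z - g z) ∂μ)) := by
  simp only [← integral_indicator₀ (huv _),
    ← integral_indicator₀ (nullMeasurableSet_lt hf.aemeasurable hg.aemeasurable)]
  refine tendsto_integral_of_dominated_convergence (fun z => ‖f z - g z‖)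
    (fun m => (hf.sub hg).aestronglyMeasurable.indicator₀ (huv m)) (hf.sub hg).norm
    (fun m => ae_of_all _ fun z => norm_indicator_le_norm_self _ _) ?_
  filter_upwards [hu, hv] with z hzu hzv
  simpa only [Set.indicator_apply, Set.mem_ofPred_eq] using tendsto_ite_lt_sub hzu hzv

theorem misclassification_eq {h : α → Fin 2} {P : α → Prop} [DecidablePred P]
    (hh : ∀ z, h z = if P z then 1 else 0) (hP : NullMeasurableSet {z | P z} μ)
    (hf : Integrable f μ) (hg : Integrable g μ) (a b : ℝ) :
    a * ∫ z in {z | h z = 1}, f z ∂μ + b * ∫ z in {z | h z = 0}, g z ∂μ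
      = b * ∫ z, g z ∂μ + ∫ z in {z | P z}, (a * f z - b * g z) ∂μ := by
  have h1 : {z | h z = 1} = {z | P z} := by ext z; by_cases hz : P z <;> simp [hh, hz]
  have h0 : {z | h z = 0} = {z | P z}ᶜ := by ext z; by_cases hz : P z <;> simp [hh, hz]
  rw [h1, h0]
  exact mul_setIntegral_add_mul_setIntegral_compl hP hf hg a b

end

theorem plugin_classifier_consistency_general (n : ℕ)
    (p : Fin 2 → EuclideanSpace ℝ (Fin n) → ℝ)
    (hpint : ∀ j, ∫ z, p j z = 1)
    (π : Fin 2 → ℝ)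
    (q : ℕ → Fin 2 → EuclideanSpace ℝ (Fin n) → ℝ)
    (hqmeas : ∀ m j, Measurable (q m j))
    (hconv : ∀ j, ∀ᵐ z ∂(volume : Measure (EuclideanSpace ℝ (Fin n))),
      Tendsto (fun m => q m j z) atTop (nhds (π j * p j z)))
    (chat : ℕ → EuclideanSpace ℝ (Fin n) → Fin 2)
    (hchat : ∀ m z, chat m z = if q m 0 z < q m 1 z then 1 else 0)
    (cstar : EuclideanSpace ℝ (Fin n) → Fin 2)
    (hcstar : ∀ z, cstar z = if π 0 * p 0 z < π 1 * p 1 z then 1 else 0)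
    (err : (EuclideanSpace ℝ (Fin n) → Fin 2) → ℝ)
    (herr : ∀ h, err h =
      π 0 * (∫ z in {z | h z = 1}, p 0 z) + π 1 * (∫ z in {z | h z = 0}, p 1 z)) :
    Tendsto (fun m => err (chat m)) atTop (nhds (err cstar)) := by
  have hp : ∀ j, Integrable (p j) := fun j =>
    Integrable.of_integral_ne_zero (by rw [hpint j]; exact one_ne_zero)
  have hπp : ∀ j, Integrable (fun z => π j * p j z) := fun j => (hp j).const_mul (π j)
  have hplugin : ∀ m, NullMeasurableSet {z | q m 0 z < q m 1 z} :=
    fun m => (measurableSet_lt (hqmeas m 0) (hqmeas m 1)).nullMeasurableSet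
  have hbayes : NullMeasurableSet {z | π 0 * p 0 z < π 1 * p 1 z} :=
    nullMeasurableSet_lt (hπp 0).aemeasurable (hπp 1).aemeasurable
  have herr_plugin : ∀ m, err (chat m) = π 1 * (∫ z, p 1 z)
      + ∫ z in {z | q m 0 z < q m 1 z}, (π 0 * p 0 z - π 1 * p 1 z) := fun m => by
    rw [herr, misclassification_eq (hchat m) (hplugin m) (hp 0) (hp 1)]
  have herr_bayes : err cstar = π 1 * (∫ z, p 1 z)
      + ∫ z in {z | π 0 * p 0 z < π 1 * p 1 z}, (π 0 * p 0 z - π 1 * p 1 z) := by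
    rw [herr, misclassification_eq hcstar hbayes (hp 0) (hp 1)]
  simp only [herr_plugin, herr_bayes]
  exact (tendsto_setIntegral_lt_sub (hπp 0) (hπp 1) hplugin (hconv 0) (hconv 1)).const_add _

/-- Consistency of the plug-in classifier: if the scaled class-conditional
density estimators q_n(j,·) = π̂_j p̂_j^{(n)} converge a.e. to π_j p_j with an integrable
dominating function, then the misclassification error of the plug-in rule
ĉ_n(x) = argmax_j q_n(j,x) converges to the Bayes error of c*(x) = argmax_j π_j p_j(x). -/
theorem plugin_classifier_consistency (n : ℕ)
    (p : Fin 2 → EuclideanSpace ℝ (Fin n) → ℝ)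
    (hp0 : ∀ j z, 0 ≤ p j z) (hpmeas : ∀ j, Measurable (p j))
    (hpint : ∀ j, ∫ z, p j z = 1)
    (π : Fin 2 → ℝ) (hπpos : ∀ j, 0 < π j) (hπsum : π 0 + π 1 = 1)
    (q : ℕ → Fin 2 → EuclideanSpace ℝ (Fin n) → ℝ)
    (hq0 : ∀ m j z, 0 ≤ q m j z) (hqmeas : ∀ m j, Measurable (q m j))
    (πhat : ℕ → Fin 2 → ℝ) (hπhat0 : ∀ m j, 0 ≤ πhat m j)
    (hqint : ∀ m j, ∫ z, q m j z = πhat m j)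
    (hconv : ∀ j, ∀ᵐ z ∂(volume : Measure (EuclideanSpace ℝ (Fin n))),
      Tendsto (fun m => q m j z) atTop (nhds (π j * p j z)))
    (g : EuclideanSpace ℝ (Fin n) → ℝ) (hg : Integrable g)
    (hdom : ∀ m j z, |q m j z| ≤ g z)
    (chat : ℕ → EuclideanSpace ℝ (Fin n) → Fin 2)
    (hchat : ∀ m z, chat m z = if q m 0 z < q m 1 z then 1 else 0)
    (cstar : EuclideanSpace ℝ (Fin n) → Fin 2)
    (hcstar : ∀ z, cstar z = if π 0 * p 0 z < π 1 * p 1 z then 1 else 0)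
    (err : (EuclideanSpace ℝ (Fin n) → Fin 2) → ℝ)
    (herr : ∀ h, err h =
      π 0 * (∫ z in {z | h z = 1}, p 0 z) + π 1 * (∫ z in {z | h z = 0}, p 1 z)) :
    Tendsto (fun m => err (chat m)) atTop (nhds (err cstar)) :=
  plugin_classifier_consistency_general n p hpint π q hqmeas hconv chat hchat cstar hcstar err herr
end
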